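/- There exists a nonzero constant C such that for all i, j ∈ {1,2,3}, the integral over ℝ³ of xᵢ·V(x)·∂ⱼW(x) equals δᵢⱼ·C, where V = 5W⁴. -/

import Mathlib

open MeasureTheory

/-- The ground state soliton `W(x) = √3 (1 + 3|x|²)^(-1/2)` on `ℝ³`. -/
noncomputable def W (x : Fin 3 → ℝ) : ℝ :=
  Real.sqrt 3 * (1 + 3 * ∑ i, x i ^ 2) ^ (-(1 : ℝ) / 2)

/-- The `i`-th partial derivative of a function on `ℝ³`. -/
noncomputable def pderiv3 (i : Fin 3) (f : (Fin 3 → ℝ) → ℝ) (x : Fin 3 → ℝ) : ℝ :=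
  fderiv ℝ f x (Pi.single i 1)

/-- The Euclidean Laplacian on `ℝ³`, `Δf = ∑ᵢ ∂ᵢ∂ᵢ f`. -/
noncomputable def laplacian3 (f : (Fin 3 → ℝ) → ℝ) (x : Fin 3 → ℝ) : ℝ :=
  ∑ i, pderiv3 i (pderiv3 i f) x

/-- `ΛW = (1/2)W + x·∇W`, the scaling derivative of the soliton. -/
noncomputable def LamW (x : Fin 3 → ℝ) : ℝ :=
  (1 / 2) * W x + ∑ i, x i * pderiv3 i W x

/-!
With `u = 1 + 3|x|²` one has `W = √3 u^(-1/2)`, `∂ⱼW = -3√3 xⱼ u^(-3/2)` and `W⁴ = 9 u⁻²`, so the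
integrand is `-135√3 xᵢ xⱼ u^(-7/2)`: a radial function times `xᵢ xⱼ`, integrable on `ℝ³` since
`xᵢ xⱼ u^(-7/2) = O(|x|⁻⁵)`. Reflecting `xⱼ ↦ -xⱼ` makes the off-diagonal integrals vanish, and
swapping two coordinates shows that the diagonal ones all agree. The common diagonal value is
nonzero because it is the integral of a continuous, nonnegative, not identically zero function.
-/

section RadialMoments

variable {ι : Type*} [Fintype ι]

lemma integral_coord_mul_coord_mul_radial_eq_zero [DecidableEq ι] (F : ℝ → ℝ) {i j : ι}
    (hij : i ≠ j) : ∫ x : ι → ℝ, x i * x j * F (∑ k, x k ^ 2) = 0 := by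
  let R : (ι → ℝ) ≃ᵐ (ι → ℝ) := MeasurableEquiv.piCongrRight fun k =>
    if k = j then MeasurableEquiv.neg ℝ else MeasurableEquiv.refl ℝ
  have hR : MeasurePreserving R := volume_preserving_pi fun k => by
    by_cases hk : k = j
    · simpa [hk] using Measure.measurePreserving_neg (volume : Measure ℝ)
    · simpa [hk] using MeasurePreserving.id (volume : Measure ℝ)
  have hRx : ∀ x k, R x k = if k = j then -x k else x k := fun x k => by
    by_cases hk : k = j <;> simp [R, hk, MeasurableEquiv.piCongrRight]
  have hodd : ∀ x, R x i * R x j * F (∑ k, R x k ^ 2) = -(x i * x j * F (∑ k, x k ^ 2)) := by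
    intro x
    have hsq : ∀ k, R x k ^ 2 = x k ^ 2 := fun k => by rw [hRx]; split_ifs <;> ring
    simp only [hsq]
    rw [hRx, hRx, if_neg hij, if_pos rfl]
    ring
  have hinv := hR.integral_comp' (fun x : ι → ℝ => x i * x j * F (∑ k, x k ^ 2))
  simp only [hodd, integral_neg] at hinv
  linarith

lemma integral_coord_mul_self_mul_radial_eq [DecidableEq ι] (F : ℝ → ℝ) (i i' : ι) :
    ∫ x : ι → ℝ, x i * x i * F (∑ k, x k ^ 2) = ∫ x : ι → ℝ, x i' * x i' * F (∑ k, x k ^ 2) := by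
  let S := MeasurableEquiv.arrowCongr' (Equiv.swap i i') (MeasurableEquiv.refl ℝ)
  have hS : MeasurePreserving S := volume_preserving_arrowCongr' _ _ (MeasurePreserving.id volume)
  rw [← hS.integral_comp']
  congr 1 with x
  have hSx : ∀ k, S x k = x (Equiv.swap i i' k) := fun k => by
    simp [S, MeasurableEquiv.arrowCongr', Equiv.arrowCongr']
  simp only [hSx, Equiv.swap_apply_left, Equiv.sum_comp (Equiv.swap i i') (fun k => x k ^ 2)]

lemma sq_norm_le_sum_sq (x : ι → ℝ) : ‖x‖ ^ 2 ≤ ∑ k, x k ^ 2 := by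
  have hs : 0 ≤ ∑ k, x k ^ 2 := by positivity
  refine (Real.le_sqrt (norm_nonneg x) hs).1 ((pi_norm_le_iff_of_nonneg (Real.sqrt_nonneg _)).2
    fun k => ?_)
  exact Real.abs_le_sqrt (Finset.single_le_sum (fun k _ => sq_nonneg (x k)) (Finset.mem_univ k))

lemma integrable_coord_mul_self_mul_rpow (i : ι) {r : ℝ} (hr : Fintype.card ι + 2 < r) :
    Integrable fun x : ι → ℝ => x i * x i * (1 + 3 * ∑ k, x k ^ 2) ^ (-r / 2) := by
  have hdom : Integrable fun x : ι → ℝ => (1 + ‖x‖ ^ 2) ^ (-(r - 2) / 2) :=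
    integrable_rpow_neg_one_add_norm_sq (by rw [Module.finrank_fintype_fun_eq_card]; linarith)
  refine hdom.mono' (by fun_prop) (ae_of_all _ fun x => ?_)
  have hs : 0 ≤ ∑ k, x k ^ 2 := by positivity
  have hxi : x i * x i ≤ 1 + 3 * ∑ k, x k ^ 2 := by
    have := Finset.single_le_sum (fun k _ => sq_nonneg (x k)) (Finset.mem_univ i)
    nlinarith
  have hnorm : 1 + ‖x‖ ^ 2 ≤ 1 + 3 * ∑ k, x k ^ 2 := by linarith [sq_norm_le_sum_sq x]
  set u := 1 + 3 * ∑ k, x k ^ 2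
  have hu : 0 < u := by positivity
  calc ‖x i * x i * u ^ (-r / 2)‖ = x i * x i * u ^ (-r / 2) :=
        Real.norm_of_nonneg (mul_nonneg (mul_self_nonneg _) (Real.rpow_nonneg hu.le _))
    _ ≤ u * u ^ (-r / 2) := by gcongr
    _ = u ^ (-(r - 2) / 2) := by
        rw [show -(r - 2) / 2 = -r / 2 + 1 by ring, Real.rpow_add_one hu.ne', mul_comm]
    _ ≤ (1 + ‖x‖ ^ 2) ^ (-(r - 2) / 2) :=
        Real.rpow_le_rpow_of_nonpos (by positivity) hnorm (by linarith)

lemma integral_coord_mul_self_mul_rpow_pos (i : ι) {r : ℝ} (hr : Fintype.card ι + 2 < r) :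
    0 < ∫ x : ι → ℝ, x i * x i * (1 + 3 * ∑ k, x k ^ 2) ^ (-r / 2) := by
  refine integral_pos_of_integrable_nonneg_nonzero (x := fun _ => 1) ?_
    (integrable_coord_mul_self_mul_rpow i hr)
    (fun x => mul_nonneg (mul_self_nonneg _) (Real.rpow_nonneg (by positivity) _)) (by positivity)
  exact (by fun_prop : Continuous fun x : ι → ℝ => x i * x i).mul
    ((by fun_prop : Continuous fun x : ι → ℝ => 1 + 3 * ∑ k, x k ^ 2).rpow_const
      fun x => Or.inl (by positivity))

lemma hasFDerivAt_sum_sq (x : ι → ℝ) :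
    HasFDerivAt (fun y : ι → ℝ => ∑ k, y k ^ 2)
      (∑ k, (2 * x k) • ContinuousLinearMap.proj (R := ℝ) (φ := fun _ : ι => ℝ) k) x := by
  refine HasFDerivAt.fun_sum fun k _ => ?_
  simpa using (hasFDerivAt_apply (𝕜 := ℝ) k x).pow 2

lemma fderiv_comp_sum_sq_apply_single [DecidableEq ι] {g : ℝ → ℝ} {g' : ℝ} {x : ι → ℝ}
    (hg : HasDerivAt g g' (∑ k, x k ^ 2)) (j : ι) :
    fderiv ℝ (fun y : ι → ℝ => g (∑ k, y k ^ 2)) x (Pi.single j 1) = 2 * x j * g' := by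
  rw [HasFDerivAt.fderiv (f := fun y : ι → ℝ => g (∑ k, y k ^ 2))
    (hg.comp_hasFDerivAt x (hasFDerivAt_sum_sq x))]
  simp only [smul_apply, sum_apply, ContinuousLinearMap.proj_apply, Pi.single_apply, smul_eq_mul,
    mul_ite, mul_one, mul_zero, Finset.sum_ite_eq', Finset.mem_univ, if_true]
  ring

end RadialMoments

lemma pderiv3_W (j : Fin 3) (x : Fin 3 → ℝ) :
    pderiv3 j W x = -3 * Real.sqrt 3 * x j * (1 + 3 * ∑ k, x k ^ 2) ^ (-(3 : ℝ) / 2) := by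
  have hu : 1 + 3 * ∑ k, x k ^ 2 ≠ 0 := by positivity
  have hg := ((((hasDerivAt_id _).const_mul 3).const_add 1).rpow_const
    (p := -(1 : ℝ) / 2) (Or.inl hu)).const_mul (Real.sqrt 3)
  change fderiv ℝ (fun y => Real.sqrt 3 * (1 + 3 * ∑ k, y k ^ 2) ^ (-(1 : ℝ) / 2)) x _ = _
  rw [fderiv_comp_sum_sq_apply_single hg, show -(1 : ℝ) / 2 - 1 = -(3 : ℝ) / 2 by norm_num]
  ring

lemma W_pow_four (x : Fin 3 → ℝ) : W x ^ 4 = 9 * (1 + 3 * ∑ k, x k ^ 2) ^ (-(2 : ℝ)) := by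
  have hsqrt : Real.sqrt 3 ^ 4 = 9 := by
    rw [show 4 = 2 * 2 from rfl, pow_mul, Real.sq_sqrt (by norm_num)]
    norm_num
  rw [W, mul_pow, hsqrt, ← Real.rpow_mul_natCast (by positivity)]
  norm_num

lemma coord_mul_V_mul_pderiv3_W (i j : Fin 3) (x : Fin 3 → ℝ) :
    x i * (5 * W x ^ 4) * pderiv3 j W x =
      -135 * Real.sqrt 3 * (x i * x j * (1 + 3 * ∑ k, x k ^ 2) ^ (-(7 : ℝ) / 2)) := by
  have hu : 0 < 1 + 3 * ∑ k, x k ^ 2 := by positivity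
  rw [W_pow_four, pderiv3_W, show -(7 : ℝ) / 2 = -2 + -3 / 2 by norm_num, Real.rpow_add hu]
  ring

/-- `∫ xᵢ V ∂ⱼW = δᵢⱼ C` for some nonzero constant `C`, with `V = 5W⁴`. -/
theorem integral_x_V_pderivW :
    ∃ C : ℝ, C ≠ 0 ∧ ∀ i j : Fin 3,
      ∫ x : Fin 3 → ℝ, x i * (5 * (W x) ^ 4) * pderiv3 j W x =
        if i = j then C else 0 := by
  let F : ℝ → ℝ := fun s => (1 + 3 * s) ^ (-(7 : ℝ) / 2)
  have hreduce : ∀ i j : Fin 3, ∫ x : Fin 3 → ℝ, x i * (5 * W x ^ 4) * pderiv3 j W x =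
      -135 * Real.sqrt 3 * ∫ x : Fin 3 → ℝ, x i * x j * F (∑ k, x k ^ 2) := fun i j => by
    simp_rw [coord_mul_V_mul_pderiv3_W]
    exact integral_const_mul _ _
  refine ⟨-135 * Real.sqrt 3 * ∫ x : Fin 3 → ℝ, x 0 * x 0 * F (∑ k, x k ^ 2), ?_, fun i j => ?_⟩
  · have hpos := integral_coord_mul_self_mul_rpow_pos (0 : Fin 3) (r := 7) (by norm_num)
    exact mul_ne_zero (by positivity) hpos.ne'
  · rw [hreduce]
    split_ifs with hij
    · rw [hij, integral_coord_mul_self_mul_radial_eq F j 0]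
    · rw [integral_coord_mul_coord_mul_radial_eq_zero F hij, mul_zero]
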